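/- Let Ω ⊆ ℂ be a bounded open set and let z ∈ Ω. Define t_Ω(z) = sSup { |deriv (fun w => p.eval w / q.eval w) z| : (p, q) an admissible rational function for Ω with ‖p/q‖_Ω ≤ 1 and p.eval z = 0 }. Let t be a real number with t > 0 and t * t_Ω(z) = 1, let λ ∈ ℂ, and let B = !![z, 0; t * λ, z]. Then ‖r(B)‖ ≤ 1 for every admissible rational function r for Ω with ‖r‖_Ω ≤ 1 if and only if |λ| ≤ 1. -/

import Mathlib

/-!
Write `a = r(z)`. Since `B - z` is nilpotent, `r(B) = !![a, 0; tλ r'(z), a]`, and a matrix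
`!![a, 0; c, a]` has operator norm at least `|c|`, and at most `1` once `|c| ≤ 1 - |a|²`.
Necessity: testing against all `r` with `r(z) = 0` gives `t |λ| |r'(z)| ≤ 1`, so taking
the supremum, `|λ| = t |λ| t_Ω ≤ 1`.
Sufficiency is the Schwarz–Pick type bound `|r'(z)| ≤ t_Ω (1 - |a|²)`: for `|a| < 1`, compose
`r` with the disc automorphism sending `a` to `0`, which scales `r'(z)` by `1 / (1 - |a|²)`;
for `|a| = 1`, `r` is locally constant at `z` by the maximum modulus principle.
-/

/-- The operator norm (on the Euclidean space `ℂ²`) of the value of the rational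
function `p/q` at the `2 × 2` matrix `B`. -/
noncomputable def ratNormAt (B : Matrix (Fin 2) (Fin 2) ℂ) (p q : Polynomial ℂ) : ℝ :=
  ‖Matrix.toEuclideanCLM (𝕜 := ℂ) (Polynomial.aeval B p * (Polynomial.aeval B q)⁻¹)‖

open Polynomial Matrix ComplexConjugate

theorem aeval_jordan {R : Type*} [CommRing R] (z c : R) (p : R[X]) :
    aeval !![z, 0; c, z] p = !![p.eval z, 0; c * p.derivative.eval z, p.eval z] := by
  induction p using Polynomial.induction_on with
  | C a =>
    ext i j
    fin_cases i <;> fin_cases j <;> simp [algebraMap_eq_diagonal]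
  | add p q hp hq =>
    rw [map_add, hp, hq]
    ext i j
    fin_cases i <;> fin_cases j <;> simp [mul_add]
  | monomial n a h =>
    rw [pow_succ, ← mul_assoc, map_mul, h, aeval_X, mul_fin_two]
    ext i j
    fin_cases i <;> fin_cases j <;> simp
    ring

theorem aeval_mul_inv_aeval_jordan {K : Type*} [Field K] (z c : K) (p q : K[X])
    (hq : q.eval z ≠ 0) :
    aeval !![z, 0; c, z] p * (aeval !![z, 0; c, z] q)⁻¹ =
      !![p.eval z / q.eval z, 0;
        c * ((p.derivative.eval z * q.eval z - p.eval z * q.derivative.eval z) / q.eval z ^ 2),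
        p.eval z / q.eval z] := by
  have hinv : (!![q.eval z, 0; c * q.derivative.eval z, q.eval z])⁻¹ =
      !![(q.eval z)⁻¹, 0; -(c * q.derivative.eval z) / q.eval z ^ 2, (q.eval z)⁻¹] := by
    refine inv_eq_right_inv ?_
    rw [mul_fin_two, one_fin_two]
    ext i j
    fin_cases i <;> fin_cases j <;> simp [hq]
    field_simp
    ring
  rw [aeval_jordan, aeval_jordan, hinv, mul_fin_two]
  ext i j
  fin_cases i <;> fin_cases j <;> simp <;> field_simp
  ring

section JordanNorm

variable {𝕜 : Type*} [RCLike 𝕜]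

theorem toEuclideanCLM_jordan_apply (a c : 𝕜) (x : EuclideanSpace 𝕜 (Fin 2)) :
    toEuclideanCLM (𝕜 := 𝕜) !![a, 0; c, a] x = !₂[a * x 0, c * x 0 + a * x 1] := by
  ext i
  fin_cases i <;> simp [ofLp_toEuclideanCLM, mulVec, dotProduct, Fin.sum_univ_two]

theorem norm_toEuclideanCLM_jordan_le_one {a c : 𝕜} (hc : ‖c‖ ≤ 1 - ‖a‖ ^ 2) :
    ‖toEuclideanCLM (𝕜 := 𝕜) !![a, 0; c, a]‖ ≤ 1 := by
  refine ContinuousLinearMap.opNorm_le_bound _ zero_le_one fun x => ?_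
  rw [one_mul, ← sq_le_sq₀ (norm_nonneg _) (norm_nonneg _), EuclideanSpace.norm_sq_eq,
    EuclideanSpace.norm_sq_eq, toEuclideanCLM_jordan_apply]
  simp only [Fin.sum_univ_two, cons_val_zero, cons_val_one, norm_mul]
  have htri : ‖c * x 0 + a * x 1‖ ≤ ‖c‖ * ‖x 0‖ + ‖a‖ * ‖x 1‖ :=
    (norm_add_le _ _).trans_eq (by rw [norm_mul, norm_mul])
  have hc' := sub_nonneg.2 hc
  have hγ := norm_nonneg c
  -- `‖x‖² - ‖Tx‖² ≥ γ (αu - v)² + (1 - α² - γ) ((1 + γ) u² + v²)` with `α, γ, u, v` the norms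
  nlinarith [pow_le_pow_left₀ (norm_nonneg _) htri 2,
    mul_nonneg hγ (sq_nonneg (‖a‖ * ‖x 0‖ - ‖x 1‖)), mul_nonneg hc' (sq_nonneg ‖x 0‖),
    mul_nonneg (mul_nonneg hc' hγ) (sq_nonneg ‖x 0‖), mul_nonneg hc' (sq_nonneg ‖x 1‖)]

theorem le_norm_toEuclideanCLM_jordan (a c : 𝕜) :
    ‖c‖ ≤ ‖toEuclideanCLM (𝕜 := 𝕜) !![a, 0; c, a]‖ := by
  have h := (toEuclideanCLM (𝕜 := 𝕜) !![a, 0; c, a]).le_opNorm (EuclideanSpace.single 0 1)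
  rw [PiLp.norm_single, norm_one, mul_one, toEuclideanCLM_jordan_apply,
    EuclideanSpace.norm_eq] at h
  refine le_trans ?_ h
  simp only [Fin.sum_univ_two, Fin.isValue, PiLp.single_eq_same, mul_one, ne_eq, one_ne_zero,
    not_false_eq_true, PiLp.single_eq_of_ne, mul_zero, add_zero, cons_val_zero, cons_val_one,
    cons_val_fin_one]
  exact Real.le_sqrt_of_sq_le (by nlinarith [sq_nonneg ‖a‖])

end JordanNorm

theorem norm_sq_sub_mul_sub_norm_sq_sub_conj_mul (u v a : ℂ) :
    ‖u - a * v‖ ^ 2 - ‖v - conj a * u‖ ^ 2 = (‖u‖ ^ 2 - ‖v‖ ^ 2) * (1 - ‖a‖ ^ 2) := by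
  simp only [Complex.sq_norm, Complex.normSq_apply, Complex.sub_re, Complex.sub_im,
    Complex.mul_re, Complex.mul_im, Complex.conj_re, Complex.conj_im]
  ring

theorem norm_sub_mul_le_norm_sub_conj_mul {u v a : ℂ} (huv : ‖u‖ ≤ ‖v‖) (ha : ‖a‖ ≤ 1) :
    ‖u - a * v‖ ≤ ‖v - conj a * u‖ := by
  have hsq : ‖u‖ ^ 2 ≤ ‖v‖ ^ 2 := pow_le_pow_left₀ (norm_nonneg _) huv 2
  have ha2 : ‖a‖ ^ 2 ≤ 1 := pow_le_one₀ (norm_nonneg _) ha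
  refine (sq_le_sq₀ (norm_nonneg _) (norm_nonneg _)).1 ?_
  nlinarith [norm_sq_sub_mul_sub_norm_sq_sub_conj_mul u v a,
    mul_nonneg (sub_nonneg.2 hsq) (sub_nonneg.2 ha2)]

theorem sub_conj_mul_ne_zero {u v a : ℂ} (huv : ‖u‖ ≤ ‖v‖) (hv : v ≠ 0) (ha : ‖a‖ < 1) :
    v - conj a * u ≠ 0 := by
  intro h
  have hnorm : ‖v‖ = ‖a‖ * ‖u‖ := by rw [sub_eq_zero.1 h, norm_mul, Complex.norm_conj]
  have hu0 : 0 < ‖u‖ := pos_of_mul_pos_right (hnorm ▸ norm_pos_iff.2 hv) (norm_nonneg a)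
  exact (huv.trans hnorm.le).not_gt (mul_lt_of_lt_one_left hu0 ha)

theorem deriv_div_eval (p q : ℂ[X]) {z : ℂ} (hq : q.eval z ≠ 0) :
    deriv (fun w => p.eval w / q.eval w) z =
      (p.derivative.eval z * q.eval z - p.eval z * q.derivative.eval z) / q.eval z ^ 2 :=
  ((p.hasDerivAt z).div (q.hasDerivAt z) hq).deriv

/-- `p / q` is an admissible rational function for `Ω` of sup norm at most `1`. -/
def IsSchurRatFun (Ω : Set ℂ) (p q : ℂ[X]) : Prop :=
  (∀ w ∈ closure Ω, q.eval w ≠ 0) ∧ ∀ w ∈ closure Ω, ‖p.eval w / q.eval w‖ ≤ 1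

namespace IsSchurRatFun

variable {Ω : Set ℂ} {p q : ℂ[X]}

theorem norm_eval_le (h : IsSchurRatFun Ω p q) {w : ℂ} (hw : w ∈ closure Ω) :
    ‖p.eval w‖ ≤ ‖q.eval w‖ := by
  have := h.2 w hw
  rwa [norm_div, div_le_one (norm_pos_iff.2 (h.1 w hw))] at this

/-- Composition with the disc automorphism `ζ ↦ (ζ - a) / (1 - conj a * ζ)`. -/
theorem mobius (h : IsSchurRatFun Ω p q) {a : ℂ} (ha : ‖a‖ < 1) :
    IsSchurRatFun Ω (p - C a * q) (q - C (conj a) * p) := by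
  have hne : ∀ w ∈ closure Ω, (q - C (conj a) * p).eval w ≠ 0 := fun w hw => by
    simpa using sub_conj_mul_ne_zero (h.norm_eval_le hw) (h.1 w hw) ha
  refine ⟨hne, fun w hw => ?_⟩
  rw [norm_div, div_le_one (norm_pos_iff.2 (hne w hw))]
  simpa using norm_sub_mul_le_norm_sub_conj_mul (h.norm_eval_le hw) ha.le

theorem deriv_eq_zero_of_norm_eq_one (h : IsSchurRatFun Ω p q) (hΩ : IsOpen Ω) {z : ℂ}
    (hz : z ∈ Ω) (h1 : ‖p.eval z / q.eval z‖ = 1) :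
    deriv (fun w => p.eval w / q.eval w) z = 0 := by
  have hdiff : ∀ᶠ w in nhds z, DifferentiableAt ℂ (fun w => p.eval w / q.eval w) w := by
    filter_upwards [hΩ.mem_nhds hz] with w hw
    exact p.differentiableAt.div q.differentiableAt (h.1 w (subset_closure hw))
  have hmax : IsLocalMax (fun w => ‖p.eval w / q.eval w‖) z := by
    filter_upwards [hΩ.mem_nhds hz] with w hw
    exact h1 ▸ h.2 w (subset_closure hw)
  rw [Filter.EventuallyEq.deriv_eq (Complex.eventually_eq_of_isLocalMax_norm hdiff hmax),
    deriv_const]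

theorem deriv_mobius (h : IsSchurRatFun Ω p q) {a z : ℂ} (hz : z ∈ closure Ω) (ha : ‖a‖ < 1)
    (hpz : p.eval z = a * q.eval z) :
    deriv (fun w => (p - C a * q).eval w / (q - C (conj a) * p).eval w) z =
      deriv (fun w => p.eval w / q.eval w) z / ((1 - ‖a‖ ^ 2 : ℝ) : ℂ) := by
  have hqz := h.1 z hz
  have hconj : conj a * a = ((‖a‖ ^ 2 : ℝ) : ℂ) := by
    rw [mul_comm, Complex.mul_conj, Complex.normSq_eq_norm_sq]
  have ha2 : ((1 - ‖a‖ ^ 2 : ℝ) : ℂ) ≠ 0 := by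
    have : ‖a‖ ^ 2 < 1 := pow_lt_one₀ (norm_nonneg _) ha two_ne_zero
    exact_mod_cast (sub_pos.2 this).ne'
  have hq₁z : (q - C (conj a) * p).eval z = q.eval z * ((1 - ‖a‖ ^ 2 : ℝ) : ℂ) := by
    simp only [eval_sub, eval_mul, eval_C, hpz, ← mul_assoc, hconj]
    push_cast; ring
  rw [deriv_div_eval _ _ (hq₁z ▸ mul_ne_zero hqz ha2), deriv_div_eval _ _ hqz, hq₁z]
  simp only [eval_sub, eval_mul, eval_C, derivative_sub, derivative_mul, derivative_C, zero_mul,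
    zero_add, hpz]
  field_simp
  ring

theorem norm_deriv_le (h : IsSchurRatFun Ω p q) (hΩ : IsOpen Ω) {z : ℂ} (hz : z ∈ Ω) {M : ℝ}
    (hM : ∀ p₀ q₀ : ℂ[X], IsSchurRatFun Ω p₀ q₀ → p₀.eval z = 0 →
      ‖deriv (fun w => p₀.eval w / q₀.eval w) z‖ ≤ M) :
    ‖deriv (fun w => p.eval w / q.eval w) z‖ ≤ M * (1 - ‖p.eval z / q.eval z‖ ^ 2) := by
  have hzc : z ∈ closure Ω := subset_closure hz
  set a := p.eval z / q.eval z
  rcases (h.2 z hzc).lt_or_eq with ha | ha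
  · have hpz : p.eval z = a * q.eval z := (div_mul_cancel₀ _ (h.1 z hzc)).symm
    have ha2 : 0 < 1 - ‖a‖ ^ 2 := sub_pos.2 (pow_lt_one₀ (norm_nonneg _) ha two_ne_zero)
    have hbound := hM _ _ (h.mobius (a := a) ha)
      (by rw [eval_sub, eval_mul, eval_C, hpz, sub_self])
    rwa [h.deriv_mobius hzc ha hpz, norm_div, Complex.norm_real, Real.norm_of_nonneg ha2.le,
      div_le_iff₀ ha2] at hbound
  · rw [h.deriv_eq_zero_of_norm_eq_one hΩ hz ha, ha]
    simp

end IsSchurRatFun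

theorem isLUB_of_eq_sSup_of_ne_zero {S : Set ℝ} {s : ℝ} (hs : s = sSup S) (hs0 : s ≠ 0)
    (hne : S.Nonempty) : IsLUB S s := by
  refine hs ▸ isLUB_csSup hne ?_
  by_contra hb
  exact hs0 (hs.trans (Real.sSup_of_not_bddAbove hb))

theorem ratNormAt_jordan {z : ℂ} (c : ℂ) {p q : ℂ[X]} (hq : q.eval z ≠ 0) :
    ratNormAt !![z, 0; c, z] p q =
      ‖toEuclideanCLM (𝕜 := ℂ) !![p.eval z / q.eval z, 0;
        c * deriv (fun w => p.eval w / q.eval w) z, p.eval z / q.eval z]‖ := by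
  rw [ratNormAt, aeval_mul_inv_aeval_jordan _ _ _ _ hq, deriv_div_eval _ _ hq]

theorem stmt_10_general (Ω : Set ℂ) (hΩo : IsOpen Ω)
    (z : ℂ) (hzΩ : z ∈ Ω)
    (tΩ : ℝ)
    (htΩ : tΩ = sSup {x : ℝ | ∃ p q : Polynomial ℂ,
      (∀ w ∈ closure Ω, q.eval w ≠ 0) ∧
      (∀ w ∈ closure Ω, ‖p.eval w / q.eval w‖ ≤ 1) ∧
      p.eval z = 0 ∧
      x = ‖deriv (fun w : ℂ => p.eval w / q.eval w) z‖})
    (t : ℝ) (ht : 0 < t) (ht2 : t * tΩ = 1)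
    (lam : ℂ)
    (B : Matrix (Fin 2) (Fin 2) ℂ)
    (hB : B = !![z, 0; (t : ℂ) * lam, z]) :
    (∀ p q : Polynomial ℂ,
      (∀ w ∈ closure Ω, q.eval w ≠ 0) →
      (∀ w ∈ closure Ω, ‖p.eval w / q.eval w‖ ≤ 1) →
      ratNormAt B p q ≤ 1) ↔ ‖lam‖ ≤ 1 := by
  subst hB
  have hzc : z ∈ closure Ω := subset_closure hzΩ
  have hlub :=
    isLUB_of_eq_sSup_of_ne_zero htΩ (right_ne_zero_of_mul_eq_one ht2) ⟨0, 0, 1, by simp⟩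
  constructor
  · intro H
    rcases eq_or_ne lam 0 with rfl | hlam
    · simp
    have htlam : 0 < t * ‖lam‖ := mul_pos ht (norm_pos_iff.2 hlam)
    have htΩ_le : tΩ ≤ 1 / (t * ‖lam‖) := hlub.2 <| by
      rintro _ ⟨p, q, hq, hpq, -, rfl⟩
      have h := (le_norm_toEuclideanCLM_jordan _ _).trans
        ((ratNormAt_jordan _ (hq z hzc)).symm.trans_le (H p q hq hpq))
      rw [norm_mul, norm_mul, Complex.norm_real, Real.norm_of_nonneg ht.le] at h
      rwa [le_div_iff₀ htlam, mul_comm]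
    rw [le_div_iff₀ htlam] at htΩ_le
    nlinarith
  · intro hlam p q hq hpq
    rw [ratNormAt_jordan _ (hq z hzc)]
    refine norm_toEuclideanCLM_jordan_le_one ?_
    have hSP := IsSchurRatFun.norm_deriv_le ⟨hq, hpq⟩ hΩo hzΩ
      (fun p q h hp => hlub.1 ⟨p, q, h.1, h.2, hp, rfl⟩)
    rw [norm_mul, norm_mul, Complex.norm_real, Real.norm_of_nonneg ht.le]
    calc t * ‖lam‖ * ‖deriv (fun w => p.eval w / q.eval w) z‖
        ≤ t * 1 * (tΩ * (1 - ‖p.eval z / q.eval z‖ ^ 2)) := by gcongr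
      _ = 1 - ‖p.eval z / q.eval z‖ ^ 2 := by rw [mul_one, ← mul_assoc, ht2, one_mul]

theorem stmt_10 (Ω : Set ℂ) (hΩo : IsOpen Ω) (hΩb : Bornology.IsBounded Ω)
    (z : ℂ) (hzΩ : z ∈ Ω)
    (tΩ : ℝ)
    (htΩ : tΩ = sSup {x : ℝ | ∃ p q : Polynomial ℂ,
      (∀ w ∈ closure Ω, q.eval w ≠ 0) ∧
      (∀ w ∈ closure Ω, ‖p.eval w / q.eval w‖ ≤ 1) ∧
      p.eval z = 0 ∧
      x = ‖deriv (fun w : ℂ => p.eval w / q.eval w) z‖})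
    (t : ℝ) (ht : 0 < t) (ht2 : t * tΩ = 1)
    (lam : ℂ)
    (B : Matrix (Fin 2) (Fin 2) ℂ)
    (hB : B = !![z, 0; (t : ℂ) * lam, z]) :
    (∀ p q : Polynomial ℂ,
      (∀ w ∈ closure Ω, q.eval w ≠ 0) →
      (∀ w ∈ closure Ω, ‖p.eval w / q.eval w‖ ≤ 1) →
      ratNormAt B p q ≤ 1) ↔ ‖lam‖ ≤ 1 :=
  stmt_10_general Ω hΩo z hzΩ tΩ htΩ t ht ht2 lam B hB
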